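/- Let ω be a non-negative integrable function on the interval (a,b) with ∫_a^b ω(y) dy = 1 and with y^k ω(y) integrable on (a,b) for every k ≥ 0, and let L_ω[f] = ∫_a^b f(y) ω(y) dy. Let (P_n)_{n≥0} be a sequence of real polynomials with deg P_n = n that is orthogonal with respect to the functional L_{yω}[f] = ∫_a^b f(y)·y·ω(y) dy (i.e., L_{yω}[P_n P_m] = 0 for n ≠ m and L_{yω}[P_n^2] ≠ 0 for all n) and satisfies L_ω[P_n] = 1 for all n. Then ∫_a^b P_n(y) P_n(x + y) ω(y) dy = P_n(x) for all real x and every n. -/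

import Mathlib

/-!
Write `Pₙ(x + y) = Pₙ(x) + y·R(y)` with `deg R < n`. Integrating against `Pₙ(y) ω(y)`, the first
term gives `Pₙ(x) · L_ω[Pₙ] = Pₙ(x)`, and the second is `L_{yω}[Pₙ R]`, which vanishes because
`P₀, …, P_{n-1}` span the polynomials of degree `< n` and are all `L_{yω}`-orthogonal to `Pₙ`.
The argument is purely algebraic once `Q ↦ ∫ Q ω` is seen as a linear functional on `ℝ[X]`.
-/

open MeasureTheory Set Polynomial

namespace Polynomial.Sequence

variable {K M : Type*} [Field K] [AddCommGroup M] [Module K M]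

theorem map_eq_zero_of_degree_lt (S : Sequence K) (ℓ : K[X] →ₗ[K] M) {n : ℕ}
    (hS : ∀ m < n, ℓ (S m) = 0) {R : K[X]} (hR : R.degree < n) : ℓ R = 0 := by
  have hspan : Submodule.span K (S '' Iio n) ≤ LinearMap.ker ℓ := by
    rw [Submodule.span_le]
    rintro _ ⟨m, hm, rfl⟩
    exact hS m hm
  rw [← LinearMap.mem_ker]
  refine hspan ?_
  rw [S.span_degreeLT fun i _ => (leadingCoeff_ne_zero.mpr (S.ne_zero i)).isUnit]
  exact mem_degreeLT.mpr hR

theorem apply_mul_eq_eval_zero_smul (S : Sequence K) (L : K[X] →ₗ[K] M) {n : ℕ}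
    (horth : ∀ m < n, L (S n * S m * X) = 0) {Q : K[X]} (hQ : Q.natDegree ≤ n) :
    L (S n * Q) = Q.eval 0 • L (S n) := by
  have hdivX : Q.divX.degree < n := by
    rcases eq_or_ne Q 0 with rfl | hQ0
    · simp
    · exact (degree_divX_lt hQ0).trans_le (degree_le_of_natDegree_le hQ)
  have hlower : L (S n * Q.divX * X) = 0 := by
    simpa [mul_assoc] using
      S.map_eq_zero_of_degree_lt (L ∘ₗ LinearMap.mulLeft K (S n) ∘ₗ LinearMap.mulRight K X)
        (fun m hm => by simpa [mul_assoc] using horth m hm) hdivX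
  calc L (S n * Q) = L (S n * Q.divX * X) + L (C (Q.coeff 0) * S n) := by
        rw [← map_add]
        conv_lhs => rw [← divX_mul_X_add Q]
        ring_nf
    _ = Q.eval 0 • L (S n) := by
        rw [hlower, zero_add, ← smul_eq_C_mul, map_smul, coeff_zero_eq_eval_zero]

end Polynomial.Sequence

theorem Polynomial.integrable_eval_mul {μ : Measure ℝ} {ω : ℝ → ℝ}
    (h_moments : ∀ k : ℕ, Integrable (fun y => y ^ k * ω y) μ) (Q : ℝ[X]) :
    Integrable (fun y => Q.eval y * ω y) μ := by
  induction Q using Polynomial.induction_on' with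
  | add p q hp hq =>
    simp only [eval_add, add_mul]
    exact hp.add hq
  | monomial k c => simpa only [eval_monomial, mul_assoc] using (h_moments k).const_mul c

noncomputable def Polynomial.integralMulLinearMap (μ : Measure ℝ) (ω : ℝ → ℝ)
    (h_moments : ∀ k : ℕ, Integrable (fun y => y ^ k * ω y) μ) : ℝ[X] →ₗ[ℝ] ℝ where
  toFun Q := ∫ y, Q.eval y * ω y ∂μ
  map_add' p q := by
    simp only [eval_add, add_mul]
    exact integral_add (integrable_eval_mul h_moments p) (integrable_eval_mul h_moments q)
  map_smul' c p := by
    simp only [eval_smul, smul_eq_mul, mul_assoc, RingHom.id_apply]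
    exact integral_const_mul c _

theorem OPS_solves_additive_integral_eq_general (a b : ℝ) (ω : ℝ → ℝ)
    (h_moments : ∀ k : ℕ, IntegrableOn (fun y => y ^ k * ω y) (Ioo a b))
    (P : ℕ → Polynomial ℝ)
    (hdeg : ∀ n, (P n).natDegree = n)
    (horth : ∀ n m, n ≠ m →
      (∫ y in Ioo a b, (P n).eval y * (P m).eval y * y * ω y) = 0)
    (hnorm : ∀ n, (∫ y in Ioo a b, (P n).eval y * ω y) = 1) :
    ∀ (n : ℕ) (x : ℝ),
      (∫ y in Ioo a b, (P n).eval y * (P n).eval (x + y) * ω y) = (P n).eval x := by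
  intro n x
  set L := integralMulLinearMap _ ω h_moments
  have hL (Q : ℝ[X]) : L Q = ∫ y in Ioo a b, Q.eval y * ω y := rfl
  have hP_ne_zero (m : ℕ) : P m ≠ 0 := fun h => by simpa [h] using hnorm m
  let S : Sequence ℝ := ⟨P, fun m => (degree_eq_iff_natDegree_eq (hP_ne_zero m)).mpr (hdeg m)⟩
  have hS_orth : ∀ m < n, L (S n * S m * X) = 0 := fun m hm => by
    simpa [hL, mul_assoc] using horth n m hm.ne'
  have hshift : ((P n).comp (X + C x)).natDegree ≤ n := by simp [natDegree_comp, hdeg]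
  have key := S.apply_mul_eq_eval_zero_smul L hS_orth hshift
  simp only [hL, eval_mul, eval_comp, eval_add, eval_X, eval_C, zero_add, smul_eq_mul] at key
  simpa [add_comm, S, hnorm n] using key

/-- Special case `ζ = 0, τ = 1, σ = 0` of Theorem 3 (the Bender–Ben-Naim equation
`∫ P(y) P(x+y) ω(y) dy = P(x)`): an OPS for `L_{yω}` normalized by `L_ω[Pₙ] = 1`
solves `∫ Pₙ(y) Pₙ(x+y) ω(y) dy = Pₙ(x)`. -/
theorem OPS_solves_additive_integral_eq (a b : ℝ) (ω : ℝ → ℝ)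
    (hω_nonneg : ∀ y ∈ Ioo a b, 0 ≤ ω y)
    (hω_int : IntegrableOn ω (Ioo a b))
    (hω_norm : (∫ y in Ioo a b, ω y) = 1)
    (h_moments : ∀ k : ℕ, IntegrableOn (fun y => y ^ k * ω y) (Ioo a b))
    (P : ℕ → Polynomial ℝ)
    (hdeg : ∀ n, (P n).natDegree = n)
    (horth : ∀ n m, n ≠ m →
      (∫ y in Ioo a b, (P n).eval y * (P m).eval y * y * ω y) = 0)
    (hne : ∀ n, (∫ y in Ioo a b, ((P n).eval y) ^ 2 * y * ω y) ≠ 0)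
    (hnorm : ∀ n, (∫ y in Ioo a b, (P n).eval y * ω y) = 1) :
    ∀ (n : ℕ) (x : ℝ),
      (∫ y in Ioo a b, (P n).eval y * (P n).eval (x + y) * ω y) = (P n).eval x :=
  OPS_solves_additive_integral_eq_general a b ω h_moments P hdeg horth hnorm
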